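/- Let 1 < p, q < ∞, β < d(p−1), γ > −d, and α ≥ d/p − d/q. Then the pair of inhomogeneous weights (⟨x⟩^β, ⟨x⟩^γ), where ⟨x⟩ = (1+|x|²)^{1/2}, satisfies the A_{p,q}^α condition if and only if all of the following hold: α − d/p + d/q ≤ β/p − γ/q, α ≤ d, γ/q ≤ d/q' − α, and β/p ≥ α − d/p (where q' = q/(q−1)). -/

import Mathlib

open MeasureTheory ENNReal NNReal Set

noncomputable section

/-- A half-open axis-parallel cube in `ℝ^d`, given by its corner and (positive) sidelength. -/
structure Cube (d : ℕ) where
  corner : Fin d → ℝ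
  side : ℝ
  side_pos : 0 < side

namespace Cube

variable {d : ℕ}

/-- The set of points of the cube: `[x_1, x_1+l) × ⋯ × [x_d, x_d+l)`. -/
def toSet (Q : Cube d) : Set (Fin d → ℝ) :=
  {y | ∀ i, Q.corner i ≤ y i ∧ y i < Q.corner i + Q.side}

/-- The translate `Q + l(Q) m` of a cube. -/
def translate (Q : Cube d) (m : Fin d → ℤ) : Cube d :=
  ⟨fun i => Q.corner i + Q.side * (m i : ℝ), Q.side, Q.side_pos⟩

/-- The corner child `x(Q) + (1/2)(Q - x(Q))` of a cube. -/
def cornerChild (Q : Cube d) : Cube d :=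
  ⟨Q.corner, Q.side / 2, by have := Q.side_pos; linarith⟩

/-- The threefold expansion `x(Q) + 3(Q - x(Q))` of a cube from its corner. -/
def expand3 (Q : Cube d) : Cube d :=
  ⟨Q.corner, 3 * Q.side, by have := Q.side_pos; linarith⟩

/-- The dilate `D_c Q`: cube with the same center as `Q` and sidelength `c·l(Q)`. -/
def dilate (Q : Cube d) (c : ℝ) (hc : 0 < c) : Cube d :=
  ⟨fun i => Q.corner i + Q.side / 2 - c * Q.side / 2, c * Q.side, by
    have := Q.side_pos; positivity⟩

end Cube

/-- A dyadic lattice in `ℝ^d`: a family of generations of cubes, each generation formed by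
all translates of one of its cubes, and each generation containing a cube whose corner child
belongs to the next generation. -/
structure DyadicLattice (d : ℕ) where
  gen : ℤ → Set (Cube d)
  gen_translates : ∀ k, ∃ Q ∈ gen k, gen k = {R | ∃ m : Fin d → ℤ, R = Q.translate m}
  cornerChild_mem : ∀ k, ∃ Q ∈ gen k, Q.cornerChild ∈ gen (k + 1)

/-- The collection of all cubes of a dyadic lattice. -/
def DyadicLattice.cubes {d : ℕ} (D : DyadicLattice d) : Set (Cube d) := ⋃ k, D.gen k

/-- The quadrant of a dyadic lattice containing `x`: the union of all cubes of the lattice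
containing `x`. -/
def DyadicLattice.quadrant {d : ℕ} (D : DyadicLattice d) (x : Fin d → ℝ) :
    Set (Fin d → ℝ) :=
  ⋃ Q ∈ {Q : Cube d | Q ∈ D.cubes ∧ x ∈ Q.toSet}, Q.toSet

/-- A weight: a locally integrable, a.e. positive (and finite) function. -/
def IsWeight {d : ℕ} (w : (Fin d → ℝ) → ℝ) : Prop :=
  LocallyIntegrable w volume ∧ ∀ᵐ x ∂(volume : Measure (Fin d → ℝ)), 0 < w x

/-- The measure `w dx` associated to a weight. -/
def wMeasure {d : ℕ} (w : (Fin d → ℝ) → ℝ) : Measure (Fin d → ℝ) :=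
  volume.withDensity fun x => ENNReal.ofReal (w x)

/-- `w(E) = ∫_E w dx`. -/
def wInt {d : ℕ} (w : (Fin d → ℝ) → ℝ) (E : Set (Fin d → ℝ)) : ℝ≥0∞ :=
  ∫⁻ x in E, ENNReal.ofReal (w x)

/-- The `L^q` norm (with `q = ∞` allowed) of an `ℝ≥0∞`-valued function. -/
def eLpNormENN {X : Type*} [MeasurableSpace X] (g : X → ℝ≥0∞) (q : ℝ≥0∞)
    (μ : Measure X) : ℝ≥0∞ :=
  if q = ∞ then essSup g μ
  else (∫⁻ x, g x ^ q.toReal ∂μ) ^ (1 / q.toReal)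

/-- The weak `L^q` quasinorm (with `q = ∞` allowed, interpreted as the `L^∞` norm) of an
`ℝ≥0∞`-valued function: `sup_{t>0} t · μ{g > t}^{1/q}`. -/
def wnormENN {X : Type*} [MeasurableSpace X] (g : X → ℝ≥0∞) (q : ℝ≥0∞)
    (μ : Measure X) : ℝ≥0∞ :=
  if q = ∞ then essSup g μ
  else ⨆ t : ℝ≥0, (t : ℝ≥0∞) * μ {x | (t : ℝ≥0∞) < g x} ^ (1 / q.toReal)

/-- The weighted dyadic fractional maximal operator
`M^D_{α,w} f(x) = sup_{Q ∈ D, x ∈ Q} w(Q)^{α/d-1} ∫_Q |f| w`. -/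
def MwDyadic {d : ℕ} (D : DyadicLattice d) (α : ℝ) (w f : (Fin d → ℝ) → ℝ)
    (x : Fin d → ℝ) : ℝ≥0∞ :=
  ⨆ (Q : Cube d) (_ : Q ∈ D.cubes) (_ : x ∈ Q.toSet),
    wInt w Q.toSet ^ (α / (d : ℝ) - 1) *
      ∫⁻ y in Q.toSet, (‖f y‖₊ : ℝ≥0∞) * ENNReal.ofReal (w y)

/-- The dyadic fractional maximal operator `M^D_α f(x) = sup_{Q ∈ D, x ∈ Q} |Q|^{α/d} ⨍_Q |f|`. -/
def MfracDyadic {d : ℕ} (D : DyadicLattice d) (α : ℝ) (f : (Fin d → ℝ) → ℝ)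
    (x : Fin d → ℝ) : ℝ≥0∞ :=
  ⨆ (Q : Cube d) (_ : Q ∈ D.cubes) (_ : x ∈ Q.toSet),
    volume Q.toSet ^ (α / (d : ℝ) - 1) * ∫⁻ y in Q.toSet, (‖f y‖₊ : ℝ≥0∞)

/-- The fractional maximal operator `M_α f(x) = sup_{Q ∋ x} |Q|^{α/d} ⨍_Q |f|`,
supremum over all cubes containing `x`. -/
def Mfrac {d : ℕ} (α : ℝ) (f : (Fin d → ℝ) → ℝ) (x : Fin d → ℝ) : ℝ≥0∞ :=
  ⨆ (Q : Cube d) (_ : x ∈ Q.toSet),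
    volume Q.toSet ^ (α / (d : ℝ) - 1) * ∫⁻ y in Q.toSet, (‖f y‖₊ : ℝ≥0∞)

/-- The weighted fractional maximal operator
`M_{α,w} f(x) = sup_{Q ∋ x} w(Q)^{α/d-1} ∫_Q |f| w`, supremum over all cubes containing `x`. -/
def Mwfrac {d : ℕ} (α : ℝ) (w f : (Fin d → ℝ) → ℝ) (x : Fin d → ℝ) : ℝ≥0∞ :=
  ⨆ (Q : Cube d) (_ : x ∈ Q.toSet),
    wInt w Q.toSet ^ (α / (d : ℝ) - 1) *
      ∫⁻ y in Q.toSet, (‖f y‖₊ : ℝ≥0∞) * ENNReal.ofReal (w y)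

/-- An `η`-sparse collection of cubes: each cube `Q` has a measurable subset `G(Q)` with
`|G(Q)| ≥ η|Q|`, the sets `G(Q)` being pairwise disjoint. -/
def IsSparseCubes {d : ℕ} (η : ℝ) (S : Set (Cube d)) : Prop :=
  ∃ G : Cube d → Set (Fin d → ℝ),
    (∀ Q ∈ S, G Q ⊆ Q.toSet ∧ MeasurableSet (G Q) ∧
      ENNReal.ofReal η * volume Q.toSet ≤ volume (G Q)) ∧
    S.PairwiseDisjoint G

/-- The sparse operator `A_S^α f(x) = Σ_{Q ∈ S} χ_Q(x) |Q|^{α/d} ⨍_Q |f|`. -/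
def sparseOp {d : ℕ} (α : ℝ) (S : Set (Cube d)) (f : (Fin d → ℝ) → ℝ)
    (x : Fin d → ℝ) : ℝ≥0∞ :=
  ∑' Q : S, (Q : Cube d).toSet.indicator
    (fun _ => volume (Q : Cube d).toSet ^ (α / (d : ℝ) - 1) *
      ∫⁻ y in (Q : Cube d).toSet, (‖f y‖₊ : ℝ≥0∞)) x

/-- The `A_{p,q}^α` constant of a pair of weights:
`[v,w] = sup_Q |Q|^{α/d-1} (∫_Q v^{-p'/p})^{1/p'} (∫_Q w)^{1/q}` where `p' = p/(p-1)`. -/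
def apqConst {d : ℕ} (p q α : ℝ) (v w : (Fin d → ℝ) → ℝ) : ℝ≥0∞ :=
  ⨆ Q : Cube d,
    volume Q.toSet ^ (α / (d : ℝ) - 1) *
      (∫⁻ x in Q.toSet, ENNReal.ofReal (v x ^ (-(p / (p - 1)) / p))) ^ ((p - 1) / p) *
      (∫⁻ x in Q.toSet, ENNReal.ofReal (w x)) ^ (1 / q)

/-- The Muckenhoupt `A_∞` condition: `sup_Q exp(⨍_Q log w⁻¹) · ⨍_Q w < ∞`. -/
def IsAinfty {d : ℕ} (w : (Fin d → ℝ) → ℝ) : Prop :=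
  ∃ C : ℝ, ∀ Q : Cube d,
    Real.exp (⨍ x in Q.toSet, Real.log (w x)⁻¹ ∂volume) *
      (⨍ x in Q.toSet, w x ∂volume) ≤ C

/-- The Euclidean norm of a point of `ℝ^d`. -/
def euclNorm {d : ℕ} (x : Fin d → ℝ) : ℝ := Real.sqrt (∑ i, x i ^ 2)

/-- The auxiliary maximal operator `M_{T,λ}` controlling oscillations of truncations of `T`:
`M_{T,λ} f(x) = sup_{Q ∋ x} ess sup_{x',x'' ∈ Q} |T(fχ_{ℝ^d∖Q*})(x') − T(fχ_{ℝ^d∖Q*})(x'')|`. -/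
def MT {d : ℕ} (T : ((Fin d → ℝ) → ℝ) → (Fin d → ℝ) → ℝ) (lam : ℝ) (hlam : 0 < lam)
    (f : (Fin d → ℝ) → ℝ) (x : Fin d → ℝ) : ℝ≥0∞ :=
  ⨆ (Q : Cube d) (_ : x ∈ Q.toSet),
    essSup
      (fun z : (Fin d → ℝ) × (Fin d → ℝ) =>
        (‖T (((Q.dilate lam hlam).toSet)ᶜ.indicator f) z.1 -
            T (((Q.dilate lam hlam).toSet)ᶜ.indicator f) z.2‖₊ : ℝ≥0∞))
      ((volume.restrict Q.toSet).prod (volume.restrict Q.toSet))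

end

/-!
Write `⟨x⟩² = 1 + ∑ xᵢ²`. For a cube `Q` of side `l` and `K = max 1 (‖x(Q)‖ + l)`, one has
`∫_Q ⟨x⟩^s ≲ l^d K^s` whenever `s > -d`: pointwise if `s ≥ 0` or if `Q` is far from the origin
relative to its size (`3l < K`), and otherwise from the homogeneity of `‖x‖^s` on balls. So the
`A_{p,q}^α` product of `Q` is `≲ l^a K^b` with `a = α - d/p + d/q ≥ 0` and `b = γ/q - β/p`, which is
bounded when `a + b ≤ 0` because `l ≤ K`. Conversely, on the cubes `[l, 2l)^d` one has `⟨x⟩ ≍ l`,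
so the product there is `≳ l^{a+b}`, forcing `a + b ≤ 0`. The other three conditions follow from
this one together with `β < d(p-1)` and `γ > -d`.
-/

open Metric

theorem sq_rpow_half {a : ℝ} (ha : 0 ≤ a) (s : ℝ) : (a ^ 2) ^ (s / 2) = a ^ s := by
  rw [← Real.rpow_natCast_mul ha, Nat.cast_ofNat, mul_div_cancel₀ s two_ne_zero]

theorem min_rpow_le_rpow {a b t : ℝ} (ha : 0 < a) (hat : a ≤ t) (htb : t ≤ b) (r : ℝ) :
    min (a ^ r) (b ^ r) ≤ t ^ r := by
  rcases le_total 0 r with hr | hr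
  · exact min_le_of_left_le (Real.rpow_le_rpow ha.le hat hr)
  · exact min_le_of_right_le (Real.rpow_le_rpow_of_nonpos (ha.trans_le hat) htb hr)

section NormRpow

variable {E : Type*} [NormedAddCommGroup E] [NormedSpace ℝ E] [FiniteDimensional ℝ E]
  [MeasurableSpace E] [BorelSpace E] (μ : Measure E) [μ.IsAddHaarMeasure]

theorem setLIntegral_ball_norm_rpow (s : ℝ) {r : ℝ} (hr : 0 < r) :
    ∫⁻ x in ball 0 r, ENNReal.ofReal (‖x‖ ^ s) ∂μ =
      ENNReal.ofReal (r ^ (Module.finrank ℝ E + s)) *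
        ∫⁻ x in ball 0 1, ENNReal.ofReal (‖x‖ ^ s) ∂μ := by
  have hmeas : Measurable fun x : E => ENNReal.ofReal (‖x‖ ^ s) :=
    (measurable_norm.pow_const s).ennreal_ofReal
  have hpre : (r • · : E → E) ⁻¹' ball 0 r = ball 0 1 := by
    ext x
    simp [norm_smul, abs_of_pos hr, hr]
  have hscale := setLIntegral_map (μ := μ) (measurableSet_ball (x := (0 : E)) (ε := r)) hmeas
    (measurable_const_smul r)
  rw [Measure.map_addHaar_smul μ hr.ne', Measure.restrict_smul, lintegral_smul_measure,
    hpre] at hscale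
  simp_rw [norm_smul, Real.norm_eq_abs, abs_of_pos hr, Real.mul_rpow hr.le (norm_nonneg _),
    ENNReal.ofReal_mul (Real.rpow_nonneg hr.le _)] at hscale
  rw [lintegral_const_mul _ hmeas] at hscale
  have hpow : 0 < r ^ Module.finrank ℝ E := pow_pos hr _
  rw [Real.rpow_add hr, Real.rpow_natCast, ENNReal.ofReal_mul hpow.le, mul_assoc, ← hscale,
    smul_eq_mul, ← mul_assoc, abs_of_pos (inv_pos.2 hpow), ← ENNReal.ofReal_mul hpow.le,
    mul_inv_cancel₀ hpow.ne', ENNReal.ofReal_one, one_mul]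

theorem setLIntegral_unitBall_norm_rpow_lt_top (hE : 1 ≤ Module.finrank ℝ E) {s : ℝ}
    (hs : -(Module.finrank ℝ E : ℝ) < s) :
    ∫⁻ x in ball 0 1, ENNReal.ofReal (‖x‖ ^ s) ∂μ < ∞ :=
  (integrableOn_ball_of_norm_le_rpow (μ := μ) (C := 1) (α := -s) hE (by linarith)
    (ae_of_all _ fun x => by simp [abs_of_nonneg (Real.rpow_nonneg (norm_nonneg x) s)])
    (measurable_norm.pow_const s).aestronglyMeasurable).setLIntegral_lt_top

end NormRpow

namespace Cube

variable {d : ℕ} (Q : Cube d)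

theorem toSet_eq_pi : Q.toSet = univ.pi fun i => Ico (Q.corner i) (Q.corner i + Q.side) := by
  ext y
  simp [toSet]

theorem volume_toSet : volume Q.toSet = ENNReal.ofReal (Q.side ^ (d : ℝ)) := by
  rw [toSet_eq_pi, volume_pi_pi, Real.rpow_natCast, ENNReal.ofReal_pow Q.side_pos.le]
  simp [Real.volume_Ico]

/-- Comparable to `⟨x⟩` at the point of `Q` farthest from the origin (`‖·‖` is the sup norm). -/
def reach : ℝ := max 1 (‖Q.corner‖ + Q.side)

theorem one_le_reach : 1 ≤ Q.reach := le_max_left _ _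

theorem reach_pos : 0 < Q.reach := one_pos.trans_le Q.one_le_reach

theorem side_le_reach : Q.side ≤ Q.reach :=
  (le_add_of_nonneg_left (norm_nonneg _)).trans (le_max_right _ _)

variable {Q} {x : Fin d → ℝ}

theorem norm_sub_corner_le (hx : x ∈ Q.toSet) : ‖x - Q.corner‖ ≤ Q.side :=
  (pi_norm_le_iff_of_nonneg Q.side_pos.le).2 fun i => by
    have := hx i
    rw [Pi.sub_apply, Real.norm_eq_abs, abs_le]
    constructor <;> linarith

theorem norm_le_reach (hx : x ∈ Q.toSet) : ‖x‖ ≤ Q.reach :=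
  calc ‖x‖ ≤ ‖Q.corner‖ + ‖x - Q.corner‖ := norm_le_insert' x Q.corner
    _ ≤ ‖Q.corner‖ + Q.side := by gcongr; exact norm_sub_corner_le hx
    _ ≤ Q.reach := le_max_right _ _

theorem reach_le_three_mul (h : 3 * Q.side < Q.reach) (hx : x ∈ Q.toSet) :
    Q.reach ≤ 3 * max 1 ‖x‖ := by
  have hcorner : ‖Q.corner‖ ≤ ‖x‖ + Q.side := by
    have := norm_le_insert' Q.corner x
    rw [norm_sub_rev] at this
    linarith [norm_sub_corner_le hx]
  have := le_max_left 1 ‖x‖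
  have := le_max_right 1 ‖x‖
  rcases lt_max_iff.1 h with h | h <;> exact max_le (by linarith) (by linarith)

end Cube

/-- `⟨x⟩²`: the weight `⟨x⟩^s` is `bracketSq x ^ (s / 2)`. -/
def bracketSq {d : ℕ} (x : Fin d → ℝ) : ℝ := 1 + ∑ i, x i ^ 2

section Bracket

variable {d : ℕ} (x : Fin d → ℝ)

theorem one_le_bracketSq : 1 ≤ bracketSq x :=
  le_add_of_nonneg_right (Finset.sum_nonneg fun _ _ => sq_nonneg _)

theorem bracketSq_pos : 0 < bracketSq x := one_pos.trans_le (one_le_bracketSq x)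

theorem continuous_bracketSq : Continuous (bracketSq (d := d)) := by
  unfold bracketSq
  fun_prop

theorem sq_norm_le_bracketSq : ‖x‖ ^ 2 ≤ bracketSq x := by
  have hsum : 0 ≤ ∑ i, x i ^ 2 := Finset.sum_nonneg fun _ _ => sq_nonneg _
  have hnorm : ‖x‖ ≤ √(∑ i, x i ^ 2) :=
    (pi_norm_le_iff_of_nonneg (Real.sqrt_nonneg _)).2 fun i => by
      rw [Real.norm_eq_abs]
      exact Real.abs_le_sqrt
        (Finset.single_le_sum (f := fun j => x j ^ 2) (fun j _ => sq_nonneg _) (Finset.mem_univ i))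
  calc ‖x‖ ^ 2 ≤ √(∑ i, x i ^ 2) ^ 2 := by gcongr
    _ = ∑ i, x i ^ 2 := Real.sq_sqrt hsum
    _ ≤ bracketSq x := le_add_of_nonneg_left zero_le_one

theorem bracketSq_le : bracketSq x ≤ (1 + d) * max 1 ‖x‖ ^ 2 := by
  have hcoord : ∀ i, x i ^ 2 ≤ max 1 ‖x‖ ^ 2 := fun i => by
    rw [← sq_abs, ← Real.norm_eq_abs]
    gcongr
    exact (norm_le_pi_norm x i).trans (le_max_right _ _)
  have hsum : ∑ i, x i ^ 2 ≤ d * max 1 ‖x‖ ^ 2 := by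
    simpa using Finset.sum_le_sum (s := Finset.univ) fun i _ => hcoord i
  have : 1 ≤ max 1 ‖x‖ ^ 2 := one_le_pow₀ (le_max_left _ _)
  unfold bracketSq
  linarith

end Bracket

namespace Cube

variable {d : ℕ} {Q : Cube d}

theorem setLIntegral_ofReal_le {f : (Fin d → ℝ) → ℝ} {B : ℝ} (h : ∀ x ∈ Q.toSet, f x ≤ B) :
    ∫⁻ x in Q.toSet, ENNReal.ofReal (f x) ≤ ENNReal.ofReal (B * Q.side ^ (d : ℝ)) :=
  calc ∫⁻ x in Q.toSet, ENNReal.ofReal (f x) ≤ ∫⁻ _ in Q.toSet, ENNReal.ofReal B :=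
        setLIntegral_mono measurable_const fun x hx => ENNReal.ofReal_le_ofReal (h x hx)
    _ = ENNReal.ofReal (B * Q.side ^ (d : ℝ)) := by
        rw [setLIntegral_const, volume_toSet,
          ← ENNReal.ofReal_mul' (Real.rpow_nonneg Q.side_pos.le _)]

theorem ofReal_le_setLIntegral {f : (Fin d → ℝ) → ℝ} {B : ℝ} (hf : Measurable f)
    (h : ∀ x ∈ Q.toSet, B ≤ f x) :
    ENNReal.ofReal (B * Q.side ^ (d : ℝ)) ≤ ∫⁻ x in Q.toSet, ENNReal.ofReal (f x) :=
  calc ENNReal.ofReal (B * Q.side ^ (d : ℝ)) = ∫⁻ _ in Q.toSet, ENNReal.ofReal B := by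
        rw [setLIntegral_const, volume_toSet,
          ← ENNReal.ofReal_mul' (Real.rpow_nonneg Q.side_pos.le _)]
    _ ≤ ∫⁻ x in Q.toSet, ENNReal.ofReal (f x) :=
        setLIntegral_mono hf.ennreal_ofReal fun x hx => ENNReal.ofReal_le_ofReal (h x hx)

theorem bracketSq_le_reach {x : Fin d → ℝ} (hx : x ∈ Q.toSet) :
    bracketSq x ≤ (1 + d) * Q.reach ^ 2 := by
  grw [bracketSq_le, max_le Q.one_le_reach (norm_le_reach hx)]

theorem setLIntegral_bracketSq_rpow_le_of_nonneg {s : ℝ} (hs : 0 ≤ s) :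
    ∫⁻ x in Q.toSet, ENNReal.ofReal (bracketSq x ^ (s / 2)) ≤
      ENNReal.ofReal ((1 + d) ^ (s / 2) * Q.side ^ (d : ℝ) * Q.reach ^ s) := by
  rw [mul_right_comm]
  refine setLIntegral_ofReal_le fun x hx => ?_
  calc bracketSq x ^ (s / 2) ≤ ((1 + d) * Q.reach ^ 2) ^ (s / 2) := by
        gcongr
        · exact (bracketSq_pos x).le
        · exact bracketSq_le_reach hx
    _ = (1 + d) ^ (s / 2) * Q.reach ^ s := by
        rw [Real.mul_rpow (by positivity) (by positivity), sq_rpow_half Q.reach_pos.le]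

theorem setLIntegral_bracketSq_rpow_le_of_far {s : ℝ} (hs : s ≤ 0)
    (hfar : 3 * Q.side < Q.reach) :
    ∫⁻ x in Q.toSet, ENNReal.ofReal (bracketSq x ^ (s / 2)) ≤
      ENNReal.ofReal ((3 ^ s)⁻¹ * Q.side ^ (d : ℝ) * Q.reach ^ s) := by
  rw [mul_right_comm]
  refine setLIntegral_ofReal_le fun x hx => ?_
  have hlow : (Q.reach / 3) ^ 2 ≤ bracketSq x :=
    calc (Q.reach / 3) ^ 2 ≤ max 1 ‖x‖ ^ 2 := by
          gcongr
          · exact div_nonneg Q.reach_pos.le zero_le_three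
          · linarith [reach_le_three_mul hfar hx]
      _ ≤ bracketSq x := by
          rcases max_cases 1 ‖x‖ with ⟨h, -⟩ | ⟨h, -⟩ <;> rw [h]
          · simpa using one_le_bracketSq x
          · exact sq_norm_le_bracketSq x
  calc bracketSq x ^ (s / 2) ≤ ((Q.reach / 3) ^ 2) ^ (s / 2) :=
        Real.rpow_le_rpow_of_nonpos (by have := Q.reach_pos; positivity) hlow (by linarith)
    _ = (3 ^ s)⁻¹ * Q.reach ^ s := by
        rw [sq_rpow_half (by have := Q.reach_pos; positivity),
          Real.div_rpow Q.reach_pos.le zero_le_three, div_eq_inv_mul]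

theorem setLIntegral_bracketSq_rpow_le_ball (hd : 0 < d) {s : ℝ} (hs0 : s ≤ 0) :
    ∫⁻ x in Q.toSet, ENNReal.ofReal (bracketSq x ^ (s / 2)) ≤
      ∫⁻ x in ball (0 : Fin d → ℝ) (2 * Q.reach), ENNReal.ofReal (‖x‖ ^ s) := by
  have : NeZero d := ⟨hd.ne'⟩
  -- off the origin, `⟨x⟩ ≥ ‖x‖` and `s ≤ 0`
  have hpt : ∀ᵐ x : Fin d → ℝ, x ∈ Q.toSet →
      ENNReal.ofReal (bracketSq x ^ (s / 2)) ≤ ENNReal.ofReal (‖x‖ ^ s) := by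
    filter_upwards [compl_mem_ae_iff.2 (measure_singleton (0 : Fin d → ℝ))] with x hx0 _
    refine ENNReal.ofReal_le_ofReal ?_
    rw [← sq_rpow_half (norm_nonneg x)]
    exact Real.rpow_le_rpow_of_nonpos (pow_pos (norm_pos_iff.2 (by simpa using hx0)) 2)
      (sq_norm_le_bracketSq x) (by linarith)
  calc ∫⁻ x in Q.toSet, ENNReal.ofReal (bracketSq x ^ (s / 2))
      ≤ ∫⁻ x in Q.toSet, ENNReal.ofReal (‖x‖ ^ s) :=
        setLIntegral_mono_ae (measurable_norm.pow_const s).ennreal_ofReal.aemeasurable hpt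
    _ ≤ ∫⁻ x in ball 0 (2 * Q.reach), ENNReal.ofReal (‖x‖ ^ s) :=
        lintegral_mono_set fun x hx =>
          mem_ball_zero_iff.2 ((norm_le_reach hx).trans_lt (by linarith [Q.reach_pos]))

end Cube

theorem setLIntegral_bracketSq_rpow_le_of_near {d : ℕ} (hd : 0 < d) {s : ℝ} (hs : -(d : ℝ) < s)
    (hs0 : s ≤ 0) :
    ∃ C, 0 ≤ C ∧ ∀ Q : Cube d, Q.reach ≤ 3 * Q.side →
      ∫⁻ x in Q.toSet, ENNReal.ofReal (bracketSq x ^ (s / 2)) ≤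
        ENNReal.ofReal (C * Q.side ^ (d : ℝ) * Q.reach ^ s) := by
  have hrank : Module.finrank ℝ (Fin d → ℝ) = d := Module.finrank_fin_fun ℝ
  set J := ∫⁻ x in ball (0 : Fin d → ℝ) 1, ENNReal.ofReal (‖x‖ ^ s)
  have hJ : J ≠ ∞ :=
    (setLIntegral_unitBall_norm_rpow_lt_top volume (by omega) (by rwa [hrank])).ne
  refine ⟨J.toReal * 2 ^ ((d : ℝ) + s) * 3 ^ (d : ℝ), by positivity, fun Q hnear => ?_⟩
  have hK := Q.reach_pos
  have hl := Q.side_pos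
  have hreach : Q.reach ^ (d : ℝ) ≤ 3 ^ (d : ℝ) * Q.side ^ (d : ℝ) := by
    rw [← Real.mul_rpow zero_le_three hl.le]
    gcongr
  calc ∫⁻ x in Q.toSet, ENNReal.ofReal (bracketSq x ^ (s / 2))
      ≤ ∫⁻ x in ball (0 : Fin d → ℝ) (2 * Q.reach), ENNReal.ofReal (‖x‖ ^ s) :=
        Cube.setLIntegral_bracketSq_rpow_le_ball hd hs0
    _ = ENNReal.ofReal (J.toReal * (2 * Q.reach) ^ ((d : ℝ) + s)) := by
        rw [setLIntegral_ball_norm_rpow volume s (by positivity), hrank, mul_comm,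
          ENNReal.ofReal_mul ENNReal.toReal_nonneg, ENNReal.ofReal_toReal hJ]
    _ ≤ ENNReal.ofReal (J.toReal * 2 ^ ((d : ℝ) + s) * 3 ^ (d : ℝ) * Q.side ^ (d : ℝ) *
          Q.reach ^ s) := by
        refine ENNReal.ofReal_le_ofReal ?_
        rw [Real.mul_rpow zero_le_two hK.le, Real.rpow_add hK]
        have := mul_le_mul_of_nonneg_left hreach
          (by positivity : 0 ≤ J.toReal * 2 ^ ((d : ℝ) + s) * Q.reach ^ s)
        linarith

theorem setLIntegral_bracketSq_rpow_le {d : ℕ} (hd : 0 < d) {s : ℝ} (hs : -(d : ℝ) < s) :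
    ∃ C, 0 ≤ C ∧ ∀ Q : Cube d, ∫⁻ x in Q.toSet, ENNReal.ofReal (bracketSq x ^ (s / 2)) ≤
      ENNReal.ofReal (C * Q.side ^ (d : ℝ) * Q.reach ^ s) := by
  rcases le_or_gt 0 s with hs0 | hs0
  · exact ⟨_, by positivity, fun Q => Cube.setLIntegral_bracketSq_rpow_le_of_nonneg hs0⟩
  obtain ⟨C, hC, hnear⟩ := setLIntegral_bracketSq_rpow_le_of_near hd hs hs0.le
  refine ⟨(3 ^ s)⁻¹ + C, by positivity, fun Q => ?_⟩
  have hl := Q.side_pos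
  have hK := Q.reach_pos
  rcases lt_or_ge (3 * Q.side) Q.reach with hfar | hnear'
  · refine (Cube.setLIntegral_bracketSq_rpow_le_of_far hs0.le hfar).trans ?_
    gcongr
    exact le_add_of_nonneg_right hC
  · refine (hnear Q hnear').trans ?_
    gcongr
    exact le_add_of_nonneg_left (by positivity)

def Cube.diagonal {d : ℕ} (l : ℝ) (hl : 0 < l) : Cube d := ⟨fun _ => l, l, hl⟩

theorem ofReal_le_setLIntegral_bracketSq_rpow_diagonal {d : ℕ} (hd : 0 < d) (s : ℝ) {l : ℝ}
    (hl : 1 ≤ l) :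
    ENNReal.ofReal (min 1 ((4 * (1 + (d : ℝ))) ^ (s / 2)) * l ^ (d : ℝ) * l ^ s) ≤
      ∫⁻ x in (Cube.diagonal (d := d) l (one_pos.trans_le hl)).toSet,
        ENNReal.ofReal (bracketSq x ^ (s / 2)) := by
  have hl0 : 0 < l := one_pos.trans_le hl
  rw [mul_right_comm]
  refine Cube.ofReal_le_setLIntegral
    (continuous_bracketSq.rpow_const fun x => Or.inl (bracketSq_pos x).ne').measurable
    fun x hx => ?_
  have hcoord : ∀ i, l ≤ x i ∧ x i < 2 * l := fun i => by
    have := hx i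
    simp only [Cube.diagonal] at this
    constructor <;> linarith
  have hlow : l ^ 2 ≤ bracketSq x :=
    calc l ^ 2 ≤ ‖x‖ ^ 2 := by
          gcongr
          calc l ≤ |x ⟨0, hd⟩| := (hcoord _).1.trans (le_abs_self _)
            _ ≤ ‖x‖ := norm_le_pi_norm x _
      _ ≤ bracketSq x := sq_norm_le_bracketSq x
  have hup : bracketSq x ≤ 4 * (1 + d) * l ^ 2 := by
    have hnorm : ‖x‖ ≤ 2 * l := (pi_norm_le_iff_of_nonneg (by positivity)).2 fun i => by
      rw [Real.norm_eq_abs, abs_le]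
      constructor <;> linarith [hcoord i]
    calc bracketSq x ≤ (1 + d) * max 1 ‖x‖ ^ 2 := bracketSq_le x
      _ ≤ (1 + d) * (2 * l) ^ 2 := by gcongr; exact max_le (by linarith) hnorm
      _ = 4 * (1 + d) * l ^ 2 := by ring
  calc min 1 ((4 * (1 + (d : ℝ))) ^ (s / 2)) * l ^ s
      = min ((l ^ 2) ^ (s / 2)) ((4 * (1 + d) * l ^ 2) ^ (s / 2)) := by
        rw [min_mul_of_nonneg _ _ (by positivity), one_mul,
          Real.mul_rpow (by positivity : (0 : ℝ) ≤ 4 * (1 + d)) (sq_nonneg l),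
          sq_rpow_half hl0.le]
    _ ≤ bracketSq x ^ (s / 2) := min_rpow_le_rpow (by positivity) hlow hup _

theorem mul_rpow_monomials {n l K C₁ C₂ e₀ e₁ e₂ s₁ s₂ : ℝ} (hl : 0 < l) (hK : 0 < K)
    (hC₁ : 0 ≤ C₁) (hC₂ : 0 ≤ C₂) :
    (l ^ n) ^ e₀ * (C₁ * l ^ n * K ^ s₁) ^ e₁ * (C₂ * l ^ n * K ^ s₂) ^ e₂ =
      C₁ ^ e₁ * C₂ ^ e₂ * (l ^ (n * (e₀ + e₁ + e₂)) * K ^ (s₁ * e₁ + s₂ * e₂)) := by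
  have hfactor : ∀ {C s e : ℝ}, 0 ≤ C →
      (C * l ^ n * K ^ s) ^ e = C ^ e * l ^ (n * e) * K ^ (s * e) := fun hC => by
    rw [Real.mul_rpow (by positivity) (by positivity), Real.mul_rpow hC (by positivity),
      ← Real.rpow_mul hl.le, ← Real.rpow_mul hK.le]
  rw [hfactor hC₁, hfactor hC₂, ← Real.rpow_mul hl.le, mul_add, mul_add, Real.rpow_add hl,
    Real.rpow_add hl, Real.rpow_add hK]
  ring

/-- The `A_{p,q}^α` product of `Q` for `v^{-p'/p} = ⟨x⟩^{s₁}` and `w = ⟨x⟩^{s₂}`, where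
`e₀ = α/d - 1`, `e₁ = 1/p'`, `e₂ = 1/q`. -/
noncomputable def bracketProduct {d : ℕ} (e₀ e₁ e₂ s₁ s₂ : ℝ) (Q : Cube d) : ℝ≥0∞ :=
  volume Q.toSet ^ e₀ * (∫⁻ x in Q.toSet, ENNReal.ofReal (bracketSq x ^ (s₁ / 2))) ^ e₁ *
    (∫⁻ x in Q.toSet, ENNReal.ofReal (bracketSq x ^ (s₂ / 2))) ^ e₂

section BracketProduct

variable {d : ℕ} {e₀ e₁ e₂ s₁ s₂ a b : ℝ} {Q : Cube d}

theorem bracketProduct_le (ha : 0 ≤ a) (hb : 0 ≤ b) (he₁ : 0 ≤ e₁) (he₂ : 0 ≤ e₂)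
    (hA : ∫⁻ x in Q.toSet, ENNReal.ofReal (bracketSq x ^ (s₁ / 2)) ≤ ENNReal.ofReal a)
    (hB : ∫⁻ x in Q.toSet, ENNReal.ofReal (bracketSq x ^ (s₂ / 2)) ≤ ENNReal.ofReal b) :
    bracketProduct e₀ e₁ e₂ s₁ s₂ Q ≤
      ENNReal.ofReal ((Q.side ^ (d : ℝ)) ^ e₀ * a ^ e₁ * b ^ e₂) := by
  have hvol : 0 < Q.side ^ (d : ℝ) := Real.rpow_pos_of_pos Q.side_pos _
  rw [ENNReal.ofReal_mul (by positivity), ENNReal.ofReal_mul (by positivity),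
    ← ENNReal.ofReal_rpow_of_pos hvol, ← ENNReal.ofReal_rpow_of_nonneg ha he₁,
    ← ENNReal.ofReal_rpow_of_nonneg hb he₂, ← Cube.volume_toSet]
  unfold bracketProduct
  gcongr

theorem le_bracketProduct (ha : 0 ≤ a) (hb : 0 ≤ b) (he₁ : 0 ≤ e₁) (he₂ : 0 ≤ e₂)
    (hA : ENNReal.ofReal a ≤ ∫⁻ x in Q.toSet, ENNReal.ofReal (bracketSq x ^ (s₁ / 2)))
    (hB : ENNReal.ofReal b ≤ ∫⁻ x in Q.toSet, ENNReal.ofReal (bracketSq x ^ (s₂ / 2))) :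
    ENNReal.ofReal ((Q.side ^ (d : ℝ)) ^ e₀ * a ^ e₁ * b ^ e₂) ≤
      bracketProduct e₀ e₁ e₂ s₁ s₂ Q := by
  have hvol : 0 < Q.side ^ (d : ℝ) := Real.rpow_pos_of_pos Q.side_pos _
  rw [ENNReal.ofReal_mul (by positivity), ENNReal.ofReal_mul (by positivity),
    ← ENNReal.ofReal_rpow_of_pos hvol, ← ENNReal.ofReal_rpow_of_nonneg ha he₁,
    ← ENNReal.ofReal_rpow_of_nonneg hb he₂, ← Cube.volume_toSet]
  unfold bracketProduct
  gcongr

theorem iSup_bracketProduct_ne_top (hd : 0 < d) (hs₁ : -(d : ℝ) < s₁) (hs₂ : -(d : ℝ) < s₂)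
    (he₁ : 0 ≤ e₁) (he₂ : 0 ≤ e₂) (hsize : 0 ≤ d * (e₀ + e₁ + e₂))
    (hdecay : d * (e₀ + e₁ + e₂) + (s₁ * e₁ + s₂ * e₂) ≤ 0) :
    ⨆ Q : Cube d, bracketProduct e₀ e₁ e₂ s₁ s₂ Q ≠ ∞ := by
  obtain ⟨C₁, hC₁, h₁⟩ := setLIntegral_bracketSq_rpow_le hd hs₁
  obtain ⟨C₂, hC₂, h₂⟩ := setLIntegral_bracketSq_rpow_le hd hs₂
  refine ne_top_of_le_ne_top (b := ENNReal.ofReal (C₁ ^ e₁ * C₂ ^ e₂)) ENNReal.ofReal_ne_top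
    (iSup_le fun Q => ?_)
  have hl := Q.side_pos
  have hK := Q.reach_pos
  -- `l(Q) ≤ reach Q` turns the two exponent conditions into a bound uniform in `Q`
  have hmonomial : Q.side ^ ((d : ℝ) * (e₀ + e₁ + e₂)) * Q.reach ^ (s₁ * e₁ + s₂ * e₂) ≤ 1 :=
    calc Q.side ^ ((d : ℝ) * (e₀ + e₁ + e₂)) * Q.reach ^ (s₁ * e₁ + s₂ * e₂)
        ≤ Q.reach ^ ((d : ℝ) * (e₀ + e₁ + e₂)) * Q.reach ^ (s₁ * e₁ + s₂ * e₂) := by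
          gcongr
          exact Q.side_le_reach
      _ ≤ 1 := by
          rw [← Real.rpow_add hK]
          exact Real.rpow_le_one_of_one_le_of_nonpos Q.one_le_reach hdecay
  calc bracketProduct e₀ e₁ e₂ s₁ s₂ Q
      ≤ ENNReal.ofReal ((Q.side ^ (d : ℝ)) ^ e₀ * (C₁ * Q.side ^ (d : ℝ) * Q.reach ^ s₁) ^ e₁ *
          (C₂ * Q.side ^ (d : ℝ) * Q.reach ^ s₂) ^ e₂) :=
        bracketProduct_le (by positivity) (by positivity) he₁ he₂ (h₁ Q) (h₂ Q)
    _ ≤ ENNReal.ofReal (C₁ ^ e₁ * C₂ ^ e₂) := by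
        rw [mul_rpow_monomials hl hK hC₁ hC₂]
        exact ENNReal.ofReal_le_ofReal (mul_le_of_le_one_right (by positivity) hmonomial)

theorem le_zero_of_iSup_bracketProduct_ne_top (hd : 0 < d) (he₁ : 0 ≤ e₁) (he₂ : 0 ≤ e₂)
    (hfin : ⨆ Q : Cube d, bracketProduct e₀ e₁ e₂ s₁ s₂ Q ≠ ∞) :
    d * (e₀ + e₁ + e₂) + (s₁ * e₁ + s₂ * e₂) ≤ 0 := by
  set c₁ := min 1 ((4 * (1 + (d : ℝ))) ^ (s₁ / 2))
  set c₂ := min 1 ((4 * (1 + (d : ℝ))) ^ (s₂ / 2))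
  have hc₁ : 0 < c₁ := lt_min one_pos (by positivity)
  have hc₂ : 0 < c₂ := lt_min one_pos (by positivity)
  have hc : 0 < c₁ ^ e₁ * c₂ ^ e₂ := by positivity
  -- test the condition on the cubes `[l, 2l)^d`
  have hlow : ∀ l, 1 ≤ l →
      c₁ ^ e₁ * c₂ ^ e₂ * l ^ (d * (e₀ + e₁ + e₂) + (s₁ * e₁ + s₂ * e₂)) ≤
        (⨆ Q : Cube d, bracketProduct e₀ e₁ e₂ s₁ s₂ Q).toReal := fun l hl => by
    have hl0 : 0 < l := one_pos.trans_le hl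
    rw [← ENNReal.ofReal_le_iff_le_toReal hfin, Real.rpow_add hl0,
      ← mul_rpow_monomials hl0 hl0 hc₁.le hc₂.le]
    exact (le_bracketProduct (by positivity) (by positivity) he₁ he₂
      (ofReal_le_setLIntegral_bracketSq_rpow_diagonal hd s₁ hl)
      (ofReal_le_setLIntegral_bracketSq_rpow_diagonal hd s₂ hl)).trans (le_iSup _ _)
  by_contra! hpos
  obtain ⟨l, hlarge, hl⟩ :=
    (((_root_.tendsto_rpow_atTop hpos).const_mul_atTop hc).eventually_gt_atTop
      (⨆ Q : Cube d, bracketProduct e₀ e₁ e₂ s₁ s₂ Q).toReal |>.and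
        (Filter.eventually_ge_atTop 1)).exists
  exact (hlow l hl).not_gt hlarge

theorem iSup_bracketProduct_ne_top_iff (hd : 0 < d) (hs₁ : -(d : ℝ) < s₁) (hs₂ : -(d : ℝ) < s₂)
    (he₁ : 0 ≤ e₁) (he₂ : 0 ≤ e₂) (hsize : 0 ≤ d * (e₀ + e₁ + e₂)) :
    ⨆ Q : Cube d, bracketProduct e₀ e₁ e₂ s₁ s₂ Q ≠ ∞ ↔
      d * (e₀ + e₁ + e₂) + (s₁ * e₁ + s₂ * e₂) ≤ 0 :=
  ⟨le_zero_of_iSup_bracketProduct_ne_top hd he₁ he₂,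
    iSup_bracketProduct_ne_top hd hs₁ hs₂ he₁ he₂ hsize⟩

end BracketProduct

theorem apqConst_bracket {d : ℕ} {p : ℝ} (hp : p ≠ 0) (q α β γ : ℝ) :
    apqConst (d := d) p q α (fun x => (1 + ∑ i, x i ^ 2) ^ (β / 2))
        (fun x => (1 + ∑ i, x i ^ 2) ^ (γ / 2)) =
      ⨆ Q : Cube d, bracketProduct (α / d - 1) ((p - 1) / p) (1 / q) (-β / (p - 1)) γ Q := by
  have hexp : β / 2 * (-(p / (p - 1)) / p) = -β / (p - 1) / 2 := by
    field_simp
  have hv : ∀ x : Fin d → ℝ, ((1 + ∑ i, x i ^ 2) ^ (β / 2)) ^ (-(p / (p - 1)) / p) =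
      bracketSq x ^ (-β / (p - 1) / 2) := fun x => by
    rw [← hexp, Real.rpow_mul (bracketSq_pos x).le]
    rfl
  simp only [apqConst, bracketProduct, hv]
  rfl

/-- characterization of the `A_{p,q}^α` condition for inhomogeneous weights. -/
theorem apq_alpha_inhomogeneous_weights
    {d : ℕ} (hd : 0 < d) (p q α β γ : ℝ) (hp : 1 < p) (hq : 1 < q)
    (hβ : β < (d : ℝ) * (p - 1)) (hγ : -(d : ℝ) < γ)
    (hα : (d : ℝ) / p - (d : ℝ) / q ≤ α) :
    apqConst (d := d) p q α (fun x => (1 + ∑ i, x i ^ 2) ^ (β / 2))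
        (fun x => (1 + ∑ i, x i ^ 2) ^ (γ / 2)) ≠ ∞ ↔
      (α - (d : ℝ) / p + (d : ℝ) / q ≤ β / p - γ / q ∧ α ≤ (d : ℝ) ∧
        γ / q ≤ (d : ℝ) / (q / (q - 1)) - α ∧ α - (d : ℝ) / p ≤ β / p) := by
  have hp1 : 0 < p - 1 := by linarith
  have hq1 : 0 < q - 1 := by linarith
  have hd' : (0 : ℝ) < d := by exact_mod_cast hd
  have hsize : (d : ℝ) * (α / d - 1 + (p - 1) / p + 1 / q) = α - d / p + d / q := by
    field_simp
    ring
  have hs₁ : -(d : ℝ) < -β / (p - 1) := by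
    rw [neg_div, neg_lt_neg_iff, div_lt_iff₀ hp1]
    exact hβ
  have hdecay : -β / (p - 1) * ((p - 1) / p) + γ * (1 / q) = -(β / p) + γ / q := by
    field_simp
  have hβp : β / p < d - d / p := by
    rw [div_lt_iff₀ (by linarith : (0 : ℝ) < p)]
    field_simp
    linarith
  have hγq : -(d / q) < γ / q := by
    rw [← neg_div, div_lt_div_iff_of_pos_right (by linarith : (0 : ℝ) < q)]
    exact hγ
  have hq' : (d : ℝ) / (q / (q - 1)) = d - d / q := by
    field_simp
  rw [apqConst_bracket (by linarith), iSup_bracketProduct_ne_top_iff hd hs₁ hγ (by positivity)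
    (by positivity) (by linarith), hsize, hdecay, hq']
  exact ⟨fun h => ⟨by linarith, by linarith, by linarith, by linarith⟩, fun h => by linarith [h.1]⟩
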